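/- Let K be a field with a valuation ν, V a K-vector space, m > 0, and ω : V → ℝ ∪ {∞} a map satisfying (1) ω(x) = ∞ iff x = 0, (2) ω(x·l) = ω(x) + m·ν(l), and (3) ω(−x) = ω(x) and ω(x + y) ≥ min(ω(x), ω(y)); let d(x,y) := 2^{−ω(x−y)}. Suppose the subspaces U and W of V are ω-complements. Then (V, d) satisfies (MC′) if and only if both (U, d|_U) and (W, d|_W) satisfy (MC′). -/

import Mathlib

/-- `2 ^ (-a)` for `a ∈ ℝ ∪ {∞}`, with the convention `2 ^ (-∞) = 0`. -/
noncomputable def toDist (a : WithTop ℝ) : ℝ :=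
  WithTop.recTopCoe 0 (fun r : ℝ => (2 : ℝ) ^ (-r)) a

/-- Property (MC′) for a distance function `d` on `X`: every nested sequence of c-balls
(closed balls of positive radius) has nonempty intersection. -/
def MCprime {X : Type*} (d : X → X → ℝ) : Prop :=
  ∀ (c : ℕ → X) (r : ℕ → ℝ),
    (∀ n, 0 < r n) →
    (∀ n, {y | d (c (n + 1)) y ≤ r (n + 1)} ⊆ {y | d (c n) y ≤ r n}) →
    (⋂ n, {y | d (c n) y ≤ r n}).Nonempty

/-- Property (MC′) for the metric subspace on `A ⊆ X` induced by `d`. -/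
def MCprimeOn {X : Type*} (d : X → X → ℝ) (A : Set X) : Prop :=
  ∀ (c : ℕ → X) (r : ℕ → ℝ),
    (∀ n, c n ∈ A) → (∀ n, 0 < r n) →
    (∀ n, {y ∈ A | d (c (n + 1)) y ≤ r (n + 1)} ⊆ {y ∈ A | d (c n) y ≤ r n}) →
    (⋂ n, {y ∈ A | d (c n) y ≤ r n}).Nonempty

/-!
Since `U` and `W` are ω-complements, `(V, d)` is isometric to `U × W` with the max-distance:
`d (a + b) (a' + b') = max (d a a') (d b b')`. Property (MC′) passes from the two factors to
the product by intersecting componentwise, and from the product to a factor by projecting a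
point of the intersection, which does not increase distances to points of the factor. For the
latter, nested c-balls of the factor need not be nested in `V`, since their radii need not
decrease; in an ultrametric space they become nested once the radii are replaced by their
running minimum.
-/

lemma toDist_top : toDist (⊤ : WithTop ℝ) = 0 := rfl

lemma toDist_nonneg (a : WithTop ℝ) : 0 ≤ toDist a := by
  induction a using WithTop.recTopCoe with
  | top => exact le_rfl
  | coe r => exact (Real.rpow_pos_of_pos two_pos _).le

lemma toDist_antitone : Antitone toDist := by
  intro a b hab
  induction b using WithTop.recTopCoe with
  | top => exact toDist_nonneg a
  | coe s =>
    induction a using WithTop.recTopCoe with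
    | top => exact absurd hab (by simp)
    | coe r =>
      exact (Real.rpow_le_rpow_left_iff one_lt_two).mpr (neg_le_neg (WithTop.coe_le_coe.mp hab))

structure IsUltrametric {X : Type*} (d : X → X → ℝ) : Prop where
  dist_self : ∀ x, d x x = 0
  dist_comm : ∀ x y, d x y = d y x
  dist_le_max : ∀ x y z, d x z ≤ max (d x y) (d y z)

namespace IsUltrametric

variable {X : Type*} {d : X → X → ℝ}

lemma setOf_dist_le_subset (hd : IsUltrametric d) {c c' : X} {s s' : ℝ}
    (hc : d c c' ≤ s) (hs : s' ≤ s) : {y | d c' y ≤ s'} ⊆ {y | d c y ≤ s} :=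
  fun y hy => (hd.dist_le_max c c' y).trans (max_le hc (le_trans hy hs))

lemma dist_le_of_nested (hd : IsUltrametric d) {A : Set X} {c : ℕ → X} {r : ℕ → ℝ}
    (hc : ∀ n, c n ∈ A) (hr : ∀ n, 0 < r n)
    (hnest : ∀ n, {y ∈ A | d (c (n + 1)) y ≤ r (n + 1)} ⊆ {y ∈ A | d (c n) y ≤ r n})
    {k n : ℕ} (hkn : k ≤ n) : d (c k) (c n) ≤ r k := by
  have hsub : {y ∈ A | d (c n) y ≤ r n} ⊆ {y ∈ A | d (c k) y ≤ r k} := by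
    induction n, hkn using Nat.le_induction with
    | base => exact subset_rfl
    | succ n _ ih => exact (hnest n).trans ih
  exact (hsub ⟨hc n, by rw [hd.dist_self]; exact (hr n).le⟩).2

lemma mcprimeOn_of_mcprime (hd : IsUltrametric d) {A : Set X}
    (hretract : ∀ x, ∃ a ∈ A, ∀ a' ∈ A, d a' a ≤ d a' x) (h : MCprime d) : MCprimeOn d A := by
  intro c r hc hr hnest
  set s : ℕ → ℝ := fun n => (Finset.range (n + 1)).inf' Finset.nonempty_range_add_one r
  have le_s : ∀ {t : ℝ} {n : ℕ}, t ≤ s n ↔ ∀ k ≤ n, t ≤ r k := by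
    simp [s, Finset.le_inf'_iff]
  have s_le : ∀ {k n : ℕ}, k ≤ n → s n ≤ r k := fun hkn => le_s.1 le_rfl _ hkn
  have s_pos : ∀ n, 0 < s n := fun n => (Finset.lt_inf'_iff _).2 fun k _ => hr k
  have s_succ_le : ∀ n, s (n + 1) ≤ s n :=
    fun n => le_s.2 fun k hk => s_le (hk.trans n.le_succ)
  have step_le : ∀ n, d (c n) (c (n + 1)) ≤ s n := fun n => le_s.2 fun k hk =>
    (hd.dist_le_max _ (c k) _).trans <| max_le
      (hd.dist_comm (c n) (c k) ▸ hd.dist_le_of_nested hc hr hnest hk)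
      (hd.dist_le_of_nested hc hr hnest (hk.trans n.le_succ))
  obtain ⟨z, hz⟩ := h c s s_pos fun n => hd.setOf_dist_le_subset (step_le n) (s_succ_le n)
  obtain ⟨a, haA, ha⟩ := hretract z
  refine ⟨a, Set.mem_iInter.2 fun n => ⟨haA, ?_⟩⟩
  exact (ha (c n) (hc n)).trans ((Set.mem_iInter.1 hz n).trans (s_le le_rfl))

end IsUltrametric

section MaxSplitting

variable {R V : Type*} [Semiring R] [AddCommMonoid V] [Module R V]
  {d : V → V → ℝ} {U W : Submodule R V}

def IsMaxSplitting (d : V → V → ℝ) (U W : Submodule R V) : Prop :=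
  ∀ a ∈ U, ∀ a' ∈ U, ∀ b ∈ W, ∀ b' ∈ W, d (a + b) (a' + b') = max (d a a') (d b b')

lemma IsMaxSplitting.symm (h : IsMaxSplitting d U W) : IsMaxSplitting d W U := by
  intro b hb b' hb' a ha a' ha'
  rw [add_comm b, add_comm b', h a ha a' ha' b hb b' hb', max_comm]

lemma IsMaxSplitting.exists_retract (h : IsMaxSplitting d U W) (hsup : U ⊔ W = ⊤) (x : V) :
    ∃ a ∈ (U : Set V), ∀ a' ∈ (U : Set V), d a' a ≤ d a' x := by
  obtain ⟨u, hu, w, hw, rfl⟩ := Submodule.mem_sup.1 (hsup ▸ Submodule.mem_top : x ∈ U ⊔ W)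
  refine ⟨u, hu, fun a' ha' => ?_⟩
  have hsplit := h a' ha' u hu 0 W.zero_mem w hw
  rw [add_zero] at hsplit
  exact hsplit ▸ le_max_left _ _

lemma IsMaxSplitting.nested_left (h : IsMaxSplitting d U W) (hself : ∀ x, d x x = 0)
    {u w : ℕ → V} {r : ℕ → ℝ} (hu : ∀ n, u n ∈ U) (hw : ∀ n, w n ∈ W) (hr : ∀ n, 0 < r n)
    (hnest : ∀ n, {y | d (u (n + 1) + w (n + 1)) y ≤ r (n + 1)} ⊆ {y | d (u n + w n) y ≤ r n})
    (n : ℕ) :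
    {y ∈ (U : Set V) | d (u (n + 1)) y ≤ r (n + 1)} ⊆ {y ∈ (U : Set V) | d (u n) y ≤ r n} := by
  rintro y ⟨hyU, hy⟩
  have hball : d (u (n + 1) + w (n + 1)) (y + w (n + 1)) ≤ r (n + 1) := by
    rw [h _ (hu _) _ hyU _ (hw _) _ (hw _), hself]
    exact max_le hy (hr _).le
  have hball' : d (u n + w n) (y + w (n + 1)) ≤ r n := hnest n hball
  rw [h _ (hu _) _ hyU _ (hw _) _ (hw _)] at hball'
  exact ⟨hyU, le_of_max_le_left hball'⟩

theorem mcprime_of_mcprimeOn (h : IsMaxSplitting d U W) (hself : ∀ x, d x x = 0)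
    (hsup : U ⊔ W = ⊤) (hU : MCprimeOn d U) (hW : MCprimeOn d W) : MCprime d := by
  intro c r hr hnest
  choose u hu w hw huw using fun n => Submodule.mem_sup.1 (hsup ▸ Submodule.mem_top : c n ∈ U ⊔ W)
  simp only [← huw] at hnest ⊢
  have hnest' : ∀ n, {y | d (w (n + 1) + u (n + 1)) y ≤ r (n + 1)} ⊆
      {y | d (w n + u n) y ≤ r n} := by
    simpa only [add_comm (w _)] using hnest
  obtain ⟨a, ha⟩ := hU u r hu hr (h.nested_left hself hu hw hr hnest)
  obtain ⟨b, hb⟩ := hW w r hw hr (h.symm.nested_left hself hw hu hr hnest')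
  simp only [Set.mem_iInter] at ha hb
  refine ⟨a + b, Set.mem_iInter.2 fun n => ?_⟩
  show d (u n + w n) (a + b) ≤ r n
  rw [h _ (hu n) _ (ha 0).1 _ (hw n) _ (hb 0).1]
  exact max_le (ha n).2 (hb n).2

end MaxSplitting

section OmegaDistance

variable {V : Type*} [AddCommGroup V] {ω : V → WithTop ℝ}

lemma isUltrametric_toDist_sub (hω0 : ω 0 = ⊤) (hωneg : ∀ x, ω (-x) = ω x)
    (hωadd : ∀ x y, min (ω x) (ω y) ≤ ω (x + y)) :
    IsUltrametric fun x y : V => toDist (ω (x - y)) where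
  dist_self x := by rw [sub_self, hω0, toDist_top]
  dist_comm x y := by rw [← neg_sub, hωneg]
  dist_le_max x y z := by
    simpa only [sub_add_sub_cancel, ← toDist_antitone.map_min] using
      toDist_antitone (hωadd (x - y) (y - z))

lemma isMaxSplitting_toDist_sub {R : Type*} [Ring R] [Module R V] {U W : Submodule R V}
    (hcompl : ∀ x ∈ U, ∀ y ∈ W, ω (x + y) = min (ω x) (ω y)) :
    IsMaxSplitting (fun x y : V => toDist (ω (x - y))) U W := by
  intro a ha a' ha' b hb b' hb'
  simp only [add_sub_add_comm, hcompl _ (U.sub_mem ha ha') _ (W.sub_mem hb hb'),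
    toDist_antitone.map_min]

end OmegaDistance

theorem MCprime_iff_of_omega_complements_general {K V : Type*} [Field K]
    [AddCommGroup V] [Module K V]
    (ω : V → WithTop ℝ)
    (hω1 : ∀ x : V, ω x = ⊤ ↔ x = 0)
    (hω3neg : ∀ x : V, ω (-x) = ω x)
    (hω3 : ∀ x y : V, min (ω x) (ω y) ≤ ω (x + y))
    (U W : Submodule K V)
    (hcompl : ∀ x ∈ U, ∀ y ∈ W, ω (x + y) = min (ω x) (ω y))
    (hdirect : IsCompl U W) :
    MCprime (fun x y : V => toDist (ω (x - y))) ↔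
      MCprimeOn (fun x y : V => toDist (ω (x - y))) (U : Set V) ∧
        MCprimeOn (fun x y : V => toDist (ω (x - y))) (W : Set V) := by
  have hd := isUltrametric_toDist_sub ((hω1 0).2 rfl) hω3neg hω3
  have hsplit := isMaxSplitting_toDist_sub hcompl
  have hsup := hdirect.sup_eq_top
  exact ⟨fun h => ⟨hd.mcprimeOn_of_mcprime (hsplit.exists_retract hsup) h,
    hd.mcprimeOn_of_mcprime (hsplit.symm.exists_retract (sup_comm U W ▸ hsup)) h⟩,
    fun ⟨hU, hW⟩ => mcprime_of_mcprimeOn hsplit hd.dist_self hsup hU hW⟩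

/-- Let `K` be a field with valuation `ν`, `V` a `K`-vector space with a
valuation-like map `ω` satisfying (1)–(3), and suppose the nonzero subspaces `U` and `W` are
`ω`-complements (i.e. `ω (x + y) = min (ω x) (ω y)` for `x ∈ U`, `y ∈ W`, and `V = U ⊕ W`).
Then `(V, d)` satisfies (MC′) iff both `(U, d|_U)` and `(W, d|_W)` satisfy (MC′). -/
theorem MCprime_iff_of_omega_complements {K V : Type*} [Field K]
    [AddCommGroup V] [Module K V]
    (ν : K → WithTop ℝ)
    (hν1 : ∀ x : K, ν x = ⊤ ↔ x = 0)
    (hνmul : ∀ x y : K, ν (x * y) = ν x + ν y)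
    (hνadd : ∀ x y : K, min (ν x) (ν y) ≤ ν (x + y))
    (m : ℝ) (hm : 0 < m)
    (ω : V → WithTop ℝ)
    (hω1 : ∀ x : V, ω x = ⊤ ↔ x = 0)
    (hω2 : ∀ (x : V) (l : K), ω (l • x) = ω x + (m : WithTop ℝ) * ν l)
    (hω3neg : ∀ x : V, ω (-x) = ω x)
    (hω3 : ∀ x y : V, min (ω x) (ω y) ≤ ω (x + y))
    (U W : Submodule K V) (hU : U ≠ ⊥) (hW : W ≠ ⊥)
    (hcompl : ∀ x ∈ U, ∀ y ∈ W, ω (x + y) = min (ω x) (ω y))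
    (hdirect : IsCompl U W) :
    MCprime (fun x y : V => toDist (ω (x - y))) ↔
      MCprimeOn (fun x y : V => toDist (ω (x - y))) (U : Set V) ∧
        MCprimeOn (fun x y : V => toDist (ω (x - y))) (W : Set V) :=
  MCprime_iff_of_omega_complements_general ω hω1 hω3neg hω3 U W hcompl hdirect
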